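/- Let V be a vector space over a field, and let v₁, …, v_m, w₁, …, w_m ∈ V be 2m linearly independent vectors. Then the m(m−1)/2 elements q_{ij} = v_i·w_j − v_j·w_i ∈ Sym²V for 1 ≤ i < j ≤ m are linearly independent in Sym²V. -/

import Mathlib

open scoped TensorProduct

/-!
STATEMENT 7: If `v₁,…,v_m, w₁,…,w_m` are `2m` linearly independent vectors of a
vector space `V` over a field `K`, then the `m(m−1)/2` elements
`q_{ij} = v_i·w_j − v_j·w_i ∈ Sym²V` (`i < j`) are linearly independent.

`Sym² V` is realized (as in characteristic 0, or any field, for these elements)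
as the subspace of symmetric tensors of `V ⊗ V`, the symmetric product `v·w`
corresponding to `v ⊗ w + w ⊗ v`.
-/

open Classical in
lemma exists_dual_family {K V : Type*} [Field K] [AddCommGroup V] [Module K V]
    {ι : Type*} {u : ι → V} (hu : LinearIndependent K u) :
    ∃ f : ι → (V →ₗ[K] K), ∀ i j, f i (u j) = if i = j then 1 else 0 := by
  let b := Module.Basis.extend ((linearIndepOn_id_range_iff hu.injective).mpr hu) (s := Set.range u)
  refine ⟨fun i => b.coord ⟨u i, ((linearIndepOn_id_range_iff hu.injective).mpr hu).subset_extend (Set.subset_univ _) ⟨i, rfl⟩⟩, fun i j => ?_⟩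
  have : u j = b ⟨u j, ((linearIndepOn_id_range_iff hu.injective).mpr hu).subset_extend (Set.subset_univ _) ⟨j, rfl⟩⟩ := by
    rw [Module.Basis.extend_apply_self]
  rw [this, Module.Basis.coord_apply, Module.Basis.repr_self, Finsupp.single_apply]
  by_cases h : i = j
  · subst h; simp
  · rw [if_neg h, if_neg]
    simp only [ne_eq, Subtype.mk.injEq]
    exact fun hh => h (hu.injective hh).symm


theorem tangent_cone_quadrics_linearly_independent (K V : Type*) [Field K]
    [AddCommGroup V] [Module K V] (m : ℕ) (v w : Fin m → V)
    (hindep : LinearIndependent K (Sum.elim v w)) :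
    LinearIndependent K (fun p : {p : Fin m × Fin m // p.1 < p.2} =>
      ((v p.1.1 ⊗ₜ[K] w p.1.2 + w p.1.2 ⊗ₜ[K] v p.1.1) -
        (v p.1.2 ⊗ₜ[K] w p.1.1 + w p.1.1 ⊗ₜ[K] v p.1.2) : V ⊗[K] V)) := by
  obtain ⟨f, hf⟩ := exists_dual_family hindep
  have hfv : ∀ i j, f (Sum.inl i) (v j) = if i = j then 1 else 0 := by
    intro i j; simpa using hf (Sum.inl i) (Sum.inl j)
  have hfw : ∀ i j, f (Sum.inr i) (w j) = if i = j then 1 else 0 := by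
    intro i j; simpa using hf (Sum.inr i) (Sum.inr j)
  have hfvw : ∀ i j, f (Sum.inl i) (w j) = 0 := by
    intro i j; simpa using hf (Sum.inl i) (Sum.inr j)
  have hfwv : ∀ i j, f (Sum.inr i) (v j) = 0 := by
    intro i j; simpa using hf (Sum.inr i) (Sum.inl j)
  -- the dual functional on V ⊗ V
  set F : {p : Fin m × Fin m // p.1 < p.2} → (V ⊗[K] V →ₗ[K] K) := fun p =>
    (TensorProduct.lid K K).toLinearMap ∘ₗ
      TensorProduct.map (f (Sum.inl p.1.1)) (f (Sum.inr p.1.2)) with hF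
  have hFq : ∀ p r : {p : Fin m × Fin m // p.1 < p.2},
      F p ((v r.1.1 ⊗ₜ[K] w r.1.2 + w r.1.2 ⊗ₜ[K] v r.1.1) -
        (v r.1.2 ⊗ₜ[K] w r.1.1 + w r.1.1 ⊗ₜ[K] v r.1.2)) = if r = p then 1 else 0 := by
    intro p r
    simp only [hF, map_sub, map_add, LinearMap.coe_comp, Function.comp_apply,
      TensorProduct.map_tmul, LinearEquiv.coe_coe, TensorProduct.lid_tmul, smul_eq_mul,
      hfv, hfw, hfvw, hfwv, mul_zero, zero_mul, add_zero, zero_add, sub_zero, mul_ite,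
      mul_one, mul_zero]
    rcases eq_or_ne r p with h | h
    · subst h; simp [if_neg (ne_of_gt r.2), if_pos rfl]
    · have h1 : ¬ (p.1.1 = r.1.1 ∧ p.1.2 = r.1.2) := by
        rintro ⟨h1, h2⟩
        exact h (Subtype.ext (Prod.ext h1.symm h2.symm))
      have h2 : ¬ (p.1.1 = r.1.2 ∧ p.1.2 = r.1.1) := by
        rintro ⟨h1, h2⟩
        exact absurd (r.2.trans_le (h1 ▸ (h2 ▸ p.2).le)) (lt_irrefl _)
      by_cases ha : p.1.1 = r.1.1 <;> by_cases hb : p.1.2 = r.1.2 <;>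
        by_cases hc : p.1.1 = r.1.2 <;> by_cases hd : p.1.2 = r.1.1 <;>
        simp_all
  rw [linearIndependent_iff]
  intro l hl
  ext p
  have := congrArg (F p) hl
  rw [map_zero, Finsupp.linearCombination_apply, Finsupp.sum, map_sum] at this
  simp only [map_smul, hFq, smul_eq_mul, mul_ite, mul_one, mul_zero] at this
  rw [Finset.sum_ite_eq' l.support p (fun _ => l _)] at this
  by_cases hp : p ∈ l.support
  · rw [if_pos hp] at this; simpa using this
  · simpa using Finsupp.notMem_support_iff.mp hp
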